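/- For a finite graph G with all degrees at least 1 and backtracking (simple) random walk, the average k-level friendship bias equals (1/(2n)) ∑_{(i_0,…,i_k)∈V_k} ( √(d_{i_k}/d_{i_0}) − √(d_{i_0}/d_{i_k}) )² · ∏_{l=1}^{k−1} (1/d_{i_l}), where V_k is the set of walks of length k in G. In particular it is zero if and only if the endpoints of every walk of length k have equal degree. -/

import Mathlib

/-!
Expanding `P ^ k` over walks, a walk `w` of length `k` with end degrees `a = d_{w_0}`,
`b = d_{w_k}` contributes `(b - a) ∏_{l<k} 1/d_{w_l} = (b/a - 1) μ(w)`, where `μ(w)` is the product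
of `1/d` over the interior vertices of `w` (the `-d_i` term is absorbed because `P ^ k` is row
stochastic). Since `μ` is invariant under reversing walks, which swaps `a` and `b`, the sum does
not change when `b/a` is replaced by `a/b`. Averaging the two gives
`½ (b/a + a/b - 2) μ(w) = ½ (√(b/a) - √(a/b))² μ(w)`, which is nonnegative and vanishes exactly
when `a = b`.
-/

open Finset

namespace Matrix

variable {ι R : Type*} [Fintype ι] [DecidableEq ι] [CommSemiring R]

theorem sum_pow_apply_mul_eq_sum_paths (M : Matrix ι ι R) (k : ℕ) (φ : ι → ι → R) :
    ∑ i, ∑ j, (M ^ k) i j * φ i j =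
      ∑ w : Fin (k + 1) → ι,
        (∏ l : Fin k, M (w l.castSucc) (w l.succ)) * φ (w 0) (w (Fin.last k)) := by
  induction k generalizing φ with
  | zero =>
    rw [← (Equiv.funUnique (Fin 1) ι).symm.sum_comp]
    simp [one_apply]
  | succ k ih =>
    calc ∑ i, ∑ j, (M ^ (k + 1)) i j * φ i j
        = ∑ i, ∑ a, (M ^ k) i a * ∑ j, M a j * φ i j := by
          simp only [pow_succ, mul_apply, sum_mul, mul_sum, mul_assoc]
          exact sum_congr rfl fun i _ => sum_comm
      _ = ∑ w : Fin (k + 1) → ι, ∑ j, (∏ l : Fin k, M (w l.castSucc) (w l.succ)) *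
            M (w (Fin.last k)) j * φ (w 0) j := by
          rw [ih fun i a => ∑ j, M a j * φ i j]
          simp only [mul_sum, mul_assoc]
      _ = _ := by
          rw [← (Fin.snocEquiv (n := k + 1) fun _ => ι).sum_comp, Fintype.sum_prod_type, sum_comm]
          refine sum_congr rfl fun w _ => sum_congr rfl fun j _ => ?_
          simp [Fin.prod_univ_castSucc, Fin.succ_castSucc, -Fin.castSucc_succ]

end Matrix

theorem Real.sqrt_div_sub_sqrt_div_sq {a b : ℝ} (ha : 0 < a) (hb : 0 < b) :
    (√(b / a) - √(a / b)) ^ 2 = (b - a) ^ 2 / (a * b) := by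
  rw [sub_sq, Real.sq_sqrt (by positivity), Real.sq_sqrt (by positivity), mul_assoc,
    ← Real.sqrt_mul (by positivity), div_mul_div_comm, mul_comm b a, div_self (by positivity),
    Real.sqrt_one]
  field_simp
  ring

namespace SimpleGraph

variable {V : Type*} [Fintype V] (G : SimpleGraph V) [DecidableRel G.Adj]

def walkTuples (k : ℕ) : Finset (Fin (k + 1) → V) :=
  {w | ∀ l : Fin k, G.Adj (w l.castSucc) (w l.succ)}

noncomputable def interiorWeight {k : ℕ} (w : Fin (k + 1) → V) : ℝ :=
  ∏ l : Fin (k + 1), if l ≠ 0 ∧ l ≠ Fin.last k then 1 / (G.degree (w l) : ℝ) else 1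

noncomputable def randomWalkMatrix : Matrix V V ℝ :=
  Matrix.of fun i j => G.adjMatrix ℝ i j / G.degree i

variable {G}

theorem comp_rev_mem_walkTuples {k : ℕ} {w : Fin (k + 1) → V} :
    w ∘ Fin.rev ∈ G.walkTuples k ↔ w ∈ G.walkTuples k := by
  suffices ∀ w : Fin (k + 1) → V, w ∈ G.walkTuples k → w ∘ Fin.rev ∈ G.walkTuples k from
    ⟨fun h => by simpa [Function.comp_def] using this _ h, this w⟩
  intro w hw
  simp only [walkTuples, mem_filter, mem_univ, true_and] at hw ⊢
  intro l
  simpa [Fin.rev_castSucc, Fin.rev_succ] using (hw l.rev).symm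

theorem sum_walkTuples_comp_rev {k : ℕ} (f : (Fin (k + 1) → V) → ℝ) :
    ∑ w ∈ G.walkTuples k, f (w ∘ Fin.rev) = ∑ w ∈ G.walkTuples k, f w :=
  sum_nbij' (· ∘ Fin.rev) (· ∘ Fin.rev) (fun _ => comp_rev_mem_walkTuples.2)
    (fun _ => comp_rev_mem_walkTuples.2) (fun w _ => by simp [Function.comp_def])
    (fun w _ => by simp [Function.comp_def]) fun _ _ => rfl

theorem interiorWeight_comp_rev {k : ℕ} (w : Fin (k + 1) → V) :
    G.interiorWeight (w ∘ Fin.rev) = G.interiorWeight w := by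
  refine Fintype.prod_equiv Fin.revPerm _ _ fun l => if_congr ?_ rfl rfl
  simp [Fin.rev_eq_iff, and_comm]

theorem sum_walkTuples_swap_mul_interiorWeight {k : ℕ} (F : V → V → ℝ) :
    ∑ w ∈ G.walkTuples k, F (w (Fin.last k)) (w 0) * G.interiorWeight w =
      ∑ w ∈ G.walkTuples k, F (w 0) (w (Fin.last k)) * G.interiorWeight w := by
  simpa [interiorWeight_comp_rev] using
    G.sum_walkTuples_comp_rev fun w => F (w 0) (w (Fin.last k)) * G.interiorWeight w

theorem interiorWeight_pos (hdeg : ∀ v, 0 < G.degree v) {k : ℕ} (w : Fin (k + 1) → V) :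
    0 < G.interiorWeight w :=
  prod_pos fun l _ => by have := hdeg (w l); split_ifs <;> positivity

theorem prod_inv_degree_eq_interiorWeight {k : ℕ} (w : Fin (k + 2) → V) :
    ∏ l : Fin (k + 1), 1 / (G.degree (w l.castSucc) : ℝ) =
      G.interiorWeight w / G.degree (w 0) := by
  simp only [interiorWeight, Fin.prod_univ_castSucc (n := k + 1), Fin.prod_univ_succ (n := k)]
  rw [Fin.castSucc_zero]
  simp [Fin.castSucc_lt_last, ne_of_lt, div_eq_inv_mul]

theorem randomWalkMatrix_mem_rowStochastic [DecidableEq V] (hdeg : ∀ v, 0 < G.degree v) :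
    G.randomWalkMatrix ∈ Matrix.rowStochastic ℝ V := by
  refine Matrix.mem_rowStochastic_iff_sum.2 ⟨fun i j => ?_, fun i => ?_⟩
  · simp only [randomWalkMatrix, Matrix.of_apply, adjMatrix_apply]
    split_ifs <;> positivity
  · have hd : (G.degree i : ℝ) ≠ 0 := by have := hdeg i; positivity
    simp only [randomWalkMatrix, Matrix.of_apply, adjMatrix_apply, ← sum_div,
      ← degree_eq_sum_if_adj, div_self hd]

theorem sum_randomWalkMatrix_pow_mul [DecidableEq V] (k : ℕ) (φ : V → V → ℝ) :
    ∑ i, ∑ j, (G.randomWalkMatrix ^ k) i j * φ i j =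
      ∑ w ∈ G.walkTuples k,
        (∏ l : Fin k, 1 / (G.degree (w l.castSucc) : ℝ)) * φ (w 0) (w (Fin.last k)) := by
  rw [Matrix.sum_pow_apply_mul_eq_sum_paths, walkTuples, sum_filter]
  refine sum_congr rfl fun w _ => ?_
  split_ifs with hw
  · simp [randomWalkMatrix, hw]
  · obtain ⟨l, hl⟩ := not_forall.1 hw
    rw [prod_eq_zero (mem_univ l) (by simp [randomWalkMatrix, hl]), zero_mul]

theorem degree_sub_mul_prod_inv_degree (hdeg : ∀ v, 0 < G.degree v) {k : ℕ}
    (w : Fin (k + 1) → V) :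
    ((G.degree (w (Fin.last k)) : ℝ) - G.degree (w 0)) *
        ∏ l : Fin k, 1 / (G.degree (w l.castSucc) : ℝ) =
      ((G.degree (w (Fin.last k)) : ℝ) / G.degree (w 0) - 1) * G.interiorWeight w := by
  cases k with
  | zero => simp [(hdeg (w 0)).ne']
  | succ k =>
    have := hdeg (w 0)
    rw [prod_inv_degree_eq_interiorWeight]
    field_simp

theorem sum_randomWalkMatrix_pow_bias [DecidableEq V] (hdeg : ∀ v, 0 < G.degree v) (k : ℕ) :
    ∑ i, ((∑ j, (G.randomWalkMatrix ^ k) i j * (G.degree j : ℝ)) - G.degree i) =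
      1 / 2 * ∑ w ∈ G.walkTuples k,
        (√((G.degree (w (Fin.last k)) : ℝ) / G.degree (w 0)) -
            √((G.degree (w 0) : ℝ) / G.degree (w (Fin.last k)))) ^ 2 * G.interiorWeight w := by
  have hd (v : V) : (0 : ℝ) < G.degree v := by have := hdeg v; positivity
  have hrev : ∑ w ∈ G.walkTuples k,
      ((G.degree (w 0) : ℝ) / G.degree (w (Fin.last k)) - 1) * G.interiorWeight w =
      ∑ w ∈ G.walkTuples k,
        ((G.degree (w (Fin.last k)) : ℝ) / G.degree (w 0) - 1) * G.interiorWeight w :=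
    sum_walkTuples_swap_mul_interiorWeight fun a b => (G.degree b : ℝ) / G.degree a - 1
  calc ∑ i, ((∑ j, (G.randomWalkMatrix ^ k) i j * (G.degree j : ℝ)) - G.degree i)
      = ∑ i, ∑ j, (G.randomWalkMatrix ^ k) i j * ((G.degree j : ℝ) - G.degree i) := by
        refine sum_congr rfl fun i _ => ?_
        have hstoch := pow_mem (G.randomWalkMatrix_mem_rowStochastic hdeg) k
        simp only [mul_sub, sum_sub_distrib, ← sum_mul, Matrix.sum_row_of_mem_rowStochastic hstoch,
          one_mul]
    _ = ∑ w ∈ G.walkTuples k,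
          ((G.degree (w (Fin.last k)) : ℝ) / G.degree (w 0) - 1) * G.interiorWeight w := by
        rw [sum_randomWalkMatrix_pow_mul]
        exact sum_congr rfl fun w _ => by rw [mul_comm]; exact degree_sub_mul_prod_inv_degree hdeg w
    _ = 1 / 2 * ∑ w ∈ G.walkTuples k,
          ((G.degree (w (Fin.last k)) : ℝ) / G.degree (w 0) - 1 +
            ((G.degree (w 0) : ℝ) / G.degree (w (Fin.last k)) - 1)) * G.interiorWeight w := by
        rw [sum_congr rfl fun w _ => add_mul _ _ _, sum_add_distrib, hrev]
        ring
    _ = _ := by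
        congr 1
        refine sum_congr rfl fun w _ => ?_
        have ha := hd (w 0)
        have hb := hd (w (Fin.last k))
        rw [Real.sqrt_div_sub_sqrt_div_sq ha hb]
        field_simp
        ring

theorem sum_sq_mul_interiorWeight_eq_zero_iff (hdeg : ∀ v, 0 < G.degree v) (k : ℕ) :
    ∑ w ∈ G.walkTuples k,
        (√((G.degree (w (Fin.last k)) : ℝ) / G.degree (w 0)) -
            √((G.degree (w 0) : ℝ) / G.degree (w (Fin.last k)))) ^ 2 * G.interiorWeight w = 0 ↔
      ∀ w ∈ G.walkTuples k, G.degree (w 0) = G.degree (w (Fin.last k)) := by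
  have hd (v : V) : (0 : ℝ) < G.degree v := by have := hdeg v; positivity
  have hw (w : Fin (k + 1) → V) := G.interiorWeight_pos hdeg w
  rw [sum_eq_zero_iff_of_nonneg fun w _ => mul_nonneg (sq_nonneg _) (hw w).le]
  refine forall₂_congr fun w _ => ?_
  have := mul_pos (hd (w 0)) (hd (w (Fin.last k)))
  rw [Real.sqrt_div_sub_sqrt_div_sq (hd _) (hd _), mul_eq_zero, or_iff_left (hw w).ne',
    div_eq_zero_iff, or_iff_left this.ne', pow_eq_zero_iff two_ne_zero, sub_eq_zero, Nat.cast_inj,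
    eq_comm]

end SimpleGraph

open SimpleGraph in
theorem stmt_3 (n : ℕ) (hn : 1 ≤ n) (G : SimpleGraph (Fin n)) [DecidableRel G.Adj]
    (hdeg : ∀ i, 1 ≤ G.degree i) (k : ℕ)
    (P : Matrix (Fin n) (Fin n) ℝ)
    (hP : ∀ i j, P i j = (G.adjMatrix ℝ) i j / (G.degree i : ℝ)) :
    ((1 / (n : ℝ)) * ∑ i, ((∑ j, (P ^ k) i j * (G.degree j : ℝ)) - (G.degree i : ℝ))
      = (1 / (2 * (n : ℝ))) *
          ∑ w ∈ Finset.univ.filter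
            (fun w : Fin (k + 1) → Fin n => ∀ l : Fin k, G.Adj (w l.castSucc) (w l.succ)),
            (Real.sqrt ((G.degree (w (Fin.last k)) : ℝ) / (G.degree (w 0) : ℝ))
              - Real.sqrt ((G.degree (w 0) : ℝ) / (G.degree (w (Fin.last k)) : ℝ)))^2
            * ∏ l : Fin (k + 1),
                (if l ≠ 0 ∧ l ≠ Fin.last k then 1 / (G.degree (w l) : ℝ) else 1))
    ∧ ((1 / (n : ℝ)) * ∑ i, ((∑ j, (P ^ k) i j * (G.degree j : ℝ)) - (G.degree i : ℝ)) = 0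
        ↔ ∀ w : Fin (k + 1) → Fin n,
            (∀ l : Fin k, G.Adj (w l.castSucc) (w l.succ)) →
            G.degree (w 0) = G.degree (w (Fin.last k))) := by
  obtain rfl : P = G.randomWalkMatrix := Matrix.ext hP
  have hn' : (n : ℝ) ≠ 0 := Nat.cast_ne_zero.2 (by omega)
  rw [G.sum_randomWalkMatrix_pow_bias hdeg k]
  refine ⟨by unfold walkTuples interiorWeight; ring, ?_⟩
  rw [mul_eq_zero, or_iff_right (one_div_ne_zero hn'), mul_eq_zero, or_iff_right (by norm_num),
    sum_sq_mul_interiorWeight_eq_zero_iff hdeg]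
  simp [walkTuples]
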